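/- arXiv:1106.2819 — 4 statements merged into one kernel-verified Lean document; each statement's English description precedes it below -/
import Mathlib

section
/- A vector w = (w1, w2, w3) ∈ ℝ³ satisfies min_{t ∈ [0,Ts)} [w1·φ1(t) + w2·φ2(t) + w3·φ3(t)] ≥ 0 if and only if w1 ≥ √(2(w2² + w3²)). In other words, the admissible region of nonnegative signals is the cone Υ = { w ∈ ℝ³ : w1 ≥ √(2(w2² + w3²)) }. -/
/-!
Substituting `θ = 2πt/Ts` and clearing the positive factor `1/√Ts`, the signal is
`w1 + √2 (w2 cos θ + w3 sin θ)` with `θ` running over a full period `[0, 2π)`.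
By Cauchy–Schwarz `a cos θ + b sin θ ≥ -√(a² + b²)`, with equality at the angle of `-(a, b)`,
so the minimum over a period is `w1 - √2 · √(w2² + w3²)`.
-/

open Real Set

theorem neg_sqrt_le_mul_cos_add_mul_sin (a b θ : ℝ) :
    -√(a ^ 2 + b ^ 2) ≤ a * cos θ + b * sin θ := by
  have hsq : (a * cos θ + b * sin θ) ^ 2 ≤ a ^ 2 + b ^ 2 := by
    nlinarith [sq_nonneg (a * sin θ - b * cos θ), sin_sq_add_cos_sq θ]
  exact (abs_le.mp (abs_le_sqrt hsq)).1

theorem exists_mem_Ico_mul_cos_add_mul_sin_eq_neg_sqrt (a b : ℝ) :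
    ∃ θ ∈ Ico 0 (2 * π), a * cos θ + b * sin θ = -√(a ^ 2 + b ^ 2) := by
  -- `π - arg (a - b i)` points in the direction of `-(a, b)` and lies in `[0, 2π)`.
  set z : ℂ := ⟨a, -b⟩
  have hnorm : ‖z‖ = √(a ^ 2 + b ^ 2) := by
    rw [Complex.norm_def, Complex.normSq_apply]
    congr 1
    ring
  refine ⟨π - z.arg, ⟨by linarith [z.arg_le_pi], by linarith [z.neg_pi_lt_arg]⟩, ?_⟩
  have hre : ‖z‖ * cos z.arg = a := z.norm_mul_cos_arg
  have him : ‖z‖ * sin z.arg = -b := z.norm_mul_sin_arg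
  rw [cos_pi_sub, sin_pi_sub, ← hnorm, ← hre]
  linear_combination sin z.arg * him - ‖z‖ * sin_sq_add_cos_sq z.arg

theorem forall_mem_Ico_nonneg_add_mul_cos_add_mul_sin_iff (a b c : ℝ) :
    (∀ θ ∈ Ico 0 (2 * π), 0 ≤ c + (a * cos θ + b * sin θ)) ↔ √(a ^ 2 + b ^ 2) ≤ c := by
  constructor
  · intro h
    obtain ⟨θ, hθ, hmin⟩ := exists_mem_Ico_mul_cos_add_mul_sin_eq_neg_sqrt a b
    linarith [h θ hθ]
  · intro h θ _
    linarith [neg_sqrt_le_mul_cos_add_mul_sin a b θ]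

theorem nonneg_signal_iff_cone (Ts : ℝ) (hTs : 0 < Ts) (w1 w2 w3 : ℝ) :
    (∀ t ∈ Set.Ico (0:ℝ) Ts,
        0 ≤ w1 * (1 / Real.sqrt Ts)
          + w2 * (Real.sqrt (2 / Ts) * Real.cos (2 * Real.pi * t / Ts))
          + w3 * (Real.sqrt (2 / Ts) * Real.sin (2 * Real.pi * t / Ts)))
      ↔ Real.sqrt (2 * (w2 ^ 2 + w3 ^ 2)) ≤ w1 := by
  have hsqrtTs : 0 < √Ts := sqrt_pos.mpr hTs
  have hsignal : ∀ θ, w1 * (1 / √Ts) + w2 * (√(2 / Ts) * cos θ) + w3 * (√(2 / Ts) * sin θ)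
      = (w1 + (√2 * w2 * cos θ + √2 * w3 * sin θ)) / √Ts := by
    intro θ
    rw [sqrt_div zero_le_two]
    field_simp
    ring
  have hcoeff : (√2 * w2) ^ 2 + (√2 * w3) ^ 2 = 2 * (w2 ^ 2 + w3 ^ 2) := by
    rw [mul_pow, mul_pow, sq_sqrt zero_le_two]
    ring
  have hperiod : (fun t => 2 * π * t / Ts) '' Ico 0 Ts = Ico 0 (2 * π) := by
    rw [show (fun t => 2 * π * t / Ts) = (2 * π / Ts * ·) by ext; ring,
      image_mul_left_Ico (by positivity), mul_zero, div_mul_cancel₀ _ hTs.ne']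
  rw [← hcoeff, ← forall_mem_Ico_nonneg_add_mul_cos_add_mul_sin_iff, ← hperiod,
    forall_mem_image]
  simp_rw [hsignal, le_div_iff₀ hsqrtTs, zero_mul]
end

section
/- For any constellation Ω = {s_0, …, s_{M−1}} ⊂ Υ of size M ≥ 2 (not all zero), the average-optical-power zero-crossing ratio satisfies (Σᵢ s_{i,1})² / (M·Σᵢ ‖sᵢ‖² − ‖Σᵢ sᵢ‖²) ≥ 2/(3(M−1)), with equality if and only if M−1 points are at the origin and the remaining point lies on the boundary of the cone Υ. -/
/-!
Write `aᵢ = (sᵢ).1`, `A = ∑ aᵢ` and `D = M ∑ ‖sᵢ‖² - ‖∑ sᵢ‖² = ½ ∑ᵢⱼ ‖sᵢ - sⱼ‖²`. On the cone,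
Cauchy–Schwarz bounds the cross term of two points: `|2 (b₁b₂ + c₁c₂)| ≤ a₁a₂`, whence
`2‖v - w‖² ≤ 3v₁² + 3w₁² - 2v₁w₁`. Summing over ordered pairs `i ≠ j` and writing
`∑ aᵢ² = A² - P` with `P = ∑_{i ≠ j} aᵢaⱼ ≥ 0` gives `2D + (3M - 2)P ≤ 3(M - 1)A²`.
Equality forces `P = 0`, so a single point `sₖ` is nonzero, and then the ratio is `2/(3(M - 1))`
exactly when `2‖sₖ‖² = 3aₖ²`, i.e. when `sₖ` lies on the boundary of the cone.
-/

def cone : Set (ℝ × ℝ × ℝ) :=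
  {w | Real.sqrt (2 * (w.2.1 ^ 2 + w.2.2 ^ 2)) ≤ w.1}

noncomputable def nsq (w : ℝ × ℝ × ℝ) : ℝ := w.1 ^ 2 + w.2.1 ^ 2 + w.2.2 ^ 2

open Finset

section Sums

variable {ι : Type*} [Fintype ι]

theorem sum_sum_eq_sum_diag_add_sum_offDiag [DecidableEq ι] (f : ι → ι → ℝ) :
    ∑ i, ∑ j, f i j = ∑ i, f i i + ∑ p ∈ univ.offDiag, f p.1 p.2 := by
  rw [← sum_product', ← diag_union_offDiag,
    sum_union (disjoint_diag_offDiag _), sum_diag]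

theorem sq_sum_eq_sum_sq_add_sum_offDiag [DecidableEq ι] (a : ι → ℝ) :
    (∑ i, a i) ^ 2 = ∑ i, a i ^ 2 + ∑ p ∈ univ.offDiag, a p.1 * a p.2 := by
  rw [sq, sum_mul_sum, sum_sum_eq_sum_diag_add_sum_offDiag]
  simp only [sq]

theorem sum_sum_sub_sq (x : ι → ℝ) :
    ∑ i, ∑ j, (x i - x j) ^ 2 = 2 * (Fintype.card ι * ∑ i, x i ^ 2 - (∑ i, x i) ^ 2) := by
  simp only [sub_sq, sum_add_distrib, sum_sub_distrib, sum_const, card_univ, nsmul_eq_mul,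
    mul_assoc, ← mul_sum, ← sum_mul]
  ring

end Sums

section Cone

variable {v w : ℝ × ℝ × ℝ}

theorem mem_cone_iff : w ∈ cone ↔ 0 ≤ w.1 ∧ 2 * (w.2.1 ^ 2 + w.2.2 ^ 2) ≤ w.1 ^ 2 :=
  Real.sqrt_le_iff

theorem fst_nonneg_of_mem_cone (hw : w ∈ cone) : 0 ≤ w.1 :=
  (mem_cone_iff.1 hw).1

theorem eq_zero_of_mem_cone_of_fst_eq_zero (hw : w ∈ cone) (h : w.1 = 0) : w = 0 := by
  obtain ⟨-, hq⟩ := mem_cone_iff.1 hw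
  rw [h] at hq
  have hb : w.2.1 = 0 := by nlinarith [sq_nonneg w.2.1, sq_nonneg w.2.2]
  have hc : w.2.2 = 0 := by nlinarith [sq_nonneg w.2.1, sq_nonneg w.2.2]
  exact Prod.ext h (Prod.ext hb hc)

theorem fst_eq_sqrt_iff_two_mul_nsq_eq (hw : w ∈ cone) :
    w.1 = Real.sqrt (2 * (w.2.1 ^ 2 + w.2.2 ^ 2)) ↔ 2 * nsq w = 3 * w.1 ^ 2 := by
  rw [eq_comm, Real.sqrt_eq_iff_mul_self_eq (by positivity) (fst_nonneg_of_mem_cone hw), nsq]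
  constructor <;> intro h <;> linarith

theorem two_mul_nsq_sub_le (hv : v ∈ cone) (hw : w ∈ cone) :
    2 * nsq (v - w) ≤ 3 * v.1 ^ 2 + 3 * w.1 ^ 2 - 2 * v.1 * w.1 := by
  obtain ⟨hv₀, hvq⟩ := mem_cone_iff.1 hv
  obtain ⟨hw₀, hwq⟩ := mem_cone_iff.1 hw
  have hcs : (2 * (v.2.1 * w.2.1 + v.2.2 * w.2.2)) ^ 2 ≤ (v.1 * w.1) ^ 2 := by
    nlinarith [sq_nonneg (v.2.1 * w.2.2 - w.2.1 * v.2.2),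
      mul_le_mul hvq hwq (by positivity) (sq_nonneg v.1)]
  have hcross : -(v.1 * w.1) ≤ 2 * (v.2.1 * w.2.1 + v.2.2 * w.2.2) :=
    (abs_le_of_sq_le_sq' hcs (mul_nonneg hv₀ hw₀)).1
  simp only [nsq, Prod.fst_sub, Prod.snd_sub]
  nlinarith

end Cone

section Configuration

variable {ι : Type*} [Fintype ι] (s : ι → ℝ × ℝ × ℝ)

theorem sum_sum_nsq_sub :
    ∑ i, ∑ j, nsq (s i - s j) = 2 * (Fintype.card ι * ∑ i, nsq (s i) - nsq (∑ i, s i)) := by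
  simp only [nsq, Prod.fst_sub, Prod.snd_sub, sum_add_distrib, sum_sum_sub_sq, Prod.fst_sum,
    Prod.snd_sum]
  ring

theorem nsq_sum_le_card_mul_sum_nsq :
    nsq (∑ i, s i) ≤ Fintype.card ι * ∑ i, nsq (s i) := by
  have h := sum_sum_nsq_sub s
  have : 0 ≤ ∑ i, ∑ j, nsq (s i - s j) :=
    sum_nonneg fun i _ => sum_nonneg fun j _ => by unfold nsq; positivity
  linarith

theorem two_mul_dispersion_add_le [DecidableEq ι] (hs : ∀ i, s i ∈ cone) :
    2 * (Fintype.card ι * ∑ i, nsq (s i) - nsq (∑ i, s i)) +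
        (3 * Fintype.card ι - 2) * ∑ p ∈ univ.offDiag, (s p.1).1 * (s p.2).1 ≤
      3 * (Fintype.card ι - 1) * (∑ i, (s i).1) ^ 2 := by
  set f : ι → ι → ℝ := fun i j =>
    3 * (s i).1 ^ 2 + 3 * (s j).1 ^ 2 - 2 * (s i).1 * (s j).1 - 2 * nsq (s i - s j)
  have hslack : 0 ≤ ∑ p ∈ univ.offDiag, f p.1 p.2 :=
    sum_nonneg fun p _ => sub_nonneg.2 (two_mul_nsq_sub_le (hs p.1) (hs p.2))
  have hdiag : ∑ i, f i i = 4 * ∑ i, (s i).1 ^ 2 := by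
    simp only [f, sub_self, mul_sum]
    exact sum_congr rfl fun i _ => by simp [nsq]; ring
  have htotal : ∑ i, ∑ j, f i j = 6 * Fintype.card ι * ∑ i, (s i).1 ^ 2
      - 2 * (∑ i, (s i).1) ^ 2 - 4 * (Fintype.card ι * ∑ i, nsq (s i) - nsq (∑ i, s i)) := by
    simp only [f, sum_sub_distrib, sum_add_distrib, sum_const, card_univ, nsmul_eq_mul,
      ← mul_sum, mul_assoc, ← sum_mul, sum_sum_nsq_sub]
    ring
  have hsplit := sum_sum_eq_sum_diag_add_sum_offDiag f
  have hsq := sq_sum_eq_sum_sq_add_sum_offDiag fun i => (s i).1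
  rw [hsq] at htotal ⊢
  linarith

variable {s} {k : ι}

theorem eq_zero_of_ne_of_sum_offDiag_eq_zero [DecidableEq ι] (hs : ∀ i, s i ∈ cone)
    (hP : ∑ p ∈ univ.offDiag, (s p.1).1 * (s p.2).1 = 0) (hk : (s k).1 ≠ 0) :
    ∀ j, j ≠ k → s j = 0 := by
  intro j hj
  have hkj := (sum_eq_zero_iff_of_nonneg fun p _ =>
    mul_nonneg (fst_nonneg_of_mem_cone (hs p.1)) (fst_nonneg_of_mem_cone (hs p.2))).1 hP (k, j)
    (mem_offDiag.2 ⟨mem_univ k, mem_univ j, hj.symm⟩)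
  exact eq_zero_of_mem_cone_of_fst_eq_zero (hs j) ((mul_eq_zero.1 hkj).resolve_left hk)

theorem div_dispersion_eq_iff_of_eq_zero_of_ne (hι : 1 < Fintype.card ι) (hsk : s k ∈ cone)
    (hk : (s k).1 ≠ 0) (hsingle : ∀ j, j ≠ k → s j = 0) :
    (∑ i, (s i).1) ^ 2 / (Fintype.card ι * ∑ i, nsq (s i) - nsq (∑ i, s i)) =
        2 / (3 * ((Fintype.card ι : ℝ) - 1)) ↔
      (s k).1 = Real.sqrt (2 * ((s k).2.1 ^ 2 + (s k).2.2 ^ 2)) := by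
  have hsum : ∑ i, s i = s k := Fintype.sum_eq_single k hsingle
  have hsum_nsq : ∑ i, nsq (s i) = nsq (s k) :=
    Fintype.sum_eq_single k fun j hj => by simp [hsingle j hj, nsq]
  have hn : (1 : ℝ) < Fintype.card ι := by exact_mod_cast hι
  have hnsq : 0 < nsq (s k) := by unfold nsq; positivity
  rw [← Prod.fst_sum, hsum, hsum_nsq, fst_eq_sqrt_iff_two_mul_nsq_eq hsk,
    div_eq_div_iff (by nlinarith) (by linarith)]
  constructor <;> intro h <;> nlinarith

end Configuration

theorem zero_crossing_optical_bound_general (M : ℕ) (hM : 2 ≤ M)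
    (s : Fin M → ℝ × ℝ × ℝ) (hs : ∀ i, s i ∈ cone)
    (hden : (M : ℝ) * (∑ i, nsq (s i)) - nsq (∑ i, s i) ≠ 0) :
    2 / (3 * ((M : ℝ) - 1)) ≤
      (∑ i, (s i).1) ^ 2 / ((M : ℝ) * (∑ i, nsq (s i)) - nsq (∑ i, s i)) ∧
    ((∑ i, (s i).1) ^ 2 / ((M : ℝ) * (∑ i, nsq (s i)) - nsq (∑ i, s i)) =
        2 / (3 * ((M : ℝ) - 1)) ↔
      ∃ i, s i ≠ 0 ∧
        (s i).1 = Real.sqrt (2 * ((s i).2.1 ^ 2 + (s i).2.2 ^ 2)) ∧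
        ∀ j, j ≠ i → s j = 0) := by
  have hcard : 1 < Fintype.card (Fin M) := by rw [Fintype.card_fin]; omega
  have hkey := two_mul_dispersion_add_le s hs
  have hD := nsq_sum_le_card_mul_sum_nsq s
  have hiff := fun k => div_dispersion_eq_iff_of_eq_zero_of_ne (s := s) (k := k) hcard (hs k)
  simp only [Fintype.card_fin] at hkey hD hiff
  have hP : 0 ≤ ∑ p ∈ univ.offDiag, (s p.1).1 * (s p.2).1 :=
    sum_nonneg fun p _ =>
      mul_nonneg (fst_nonneg_of_mem_cone (hs p.1)) (fst_nonneg_of_mem_cone (hs p.2))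
  have hDpos := lt_of_le_of_ne (sub_nonneg.2 hD) hden.symm
  have hM' : (2 : ℝ) ≤ M := by exact_mod_cast hM
  have hc : (0 : ℝ) < 3 * (M - 1) := by linarith
  refine ⟨(div_le_div_iff₀ hc hDpos).2 (by nlinarith), fun heq => ?_, ?_⟩
  · have hlin := (div_eq_div_iff hDpos.ne' hc.ne').1 heq
    have hP0 : ∑ p ∈ univ.offDiag, (s p.1).1 * (s p.2).1 = 0 := by nlinarith
    have hA : ∑ i, (s i).1 ≠ 0 := fun h => by simp [h] at hlin; linarith
    obtain ⟨k, -, hk⟩ := exists_ne_zero_of_sum_ne_zero hA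
    have hsingle := eq_zero_of_ne_of_sum_offDiag_eq_zero hs hP0 hk
    exact ⟨k, fun h => hk (by simp [h]), (hiff k hk hsingle).1 heq, hsingle⟩
  · rintro ⟨k, hk, hbd, hsingle⟩
    have hk1 : (s k).1 ≠ 0 := fun h => hk (eq_zero_of_mem_cone_of_fst_eq_zero (hs k) h)
    exact (hiff k hk1 hsingle).2 hbd

theorem zero_crossing_optical_bound (M : ℕ) (hM : 2 ≤ M)
    (s : Fin M → ℝ × ℝ × ℝ) (hs : ∀ i, s i ∈ cone)
    (hnz : ∃ i, s i ≠ 0)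
    (hden : (M : ℝ) * (∑ i, nsq (s i)) - nsq (∑ i, s i) ≠ 0) :
    2 / (3 * ((M : ℝ) - 1)) ≤
      (∑ i, (s i).1) ^ 2 / ((M : ℝ) * (∑ i, nsq (s i)) - nsq (∑ i, s i)) ∧
    ((∑ i, (s i).1) ^ 2 / ((M : ℝ) * (∑ i, nsq (s i)) - nsq (∑ i, s i)) =
        2 / (3 * ((M : ℝ) - 1)) ↔
      ∃ i, s i ≠ 0 ∧
        (s i).1 = Real.sqrt (2 * ((s i).2.1 ^ 2 + (s i).2.2 ^ 2)) ∧
        ∀ j, j ≠ i → s j = 0) :=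
  zero_crossing_optical_bound_general M hM s hs hden
end

section
/- For the one-point-off-origin constellation E_M = {0, …, 0, (√(M·E_s), 0, 0)} ⊂ ℝ³ with M−1 points at the origin, the average energy is E_s, the mean vector is (√(E_s/M), 0, 0), and α(E_M) = 1 − ‖Σ sᵢ‖²/(M·Σ ‖sᵢ‖²) = (M−1)/M, achieving the maximum possible value of this expression over all constellations in Υ. -/
lemma cone_inner_nonneg (u v : ℝ × ℝ × ℝ) (hu : u ∈ cone) (hv : v ∈ cone) :
    0 ≤ u.1 * v.1 + u.2.1 * v.2.1 + u.2.2 * v.2.2 := by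
  have hu1 : 0 ≤ u.1 := le_trans (Real.sqrt_nonneg _) hu
  have hv1 : 0 ≤ v.1 := le_trans (Real.sqrt_nonneg _) hv
  have hu2 : 2 * (u.2.1 ^ 2 + u.2.2 ^ 2) ≤ u.1 ^ 2 := by
    have h0 : (0:ℝ) ≤ 2 * (u.2.1 ^ 2 + u.2.2 ^ 2) := by positivity
    calc 2 * (u.2.1 ^ 2 + u.2.2 ^ 2) = (Real.sqrt (2 * (u.2.1 ^ 2 + u.2.2 ^ 2)))^2 :=
          (Real.sq_sqrt h0).symm
      _ ≤ u.1 ^ 2 := pow_le_pow_left₀ (Real.sqrt_nonneg _) hu 2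
  have hv2 : 2 * (v.2.1 ^ 2 + v.2.2 ^ 2) ≤ v.1 ^ 2 := by
    have h0 : (0:ℝ) ≤ 2 * (v.2.1 ^ 2 + v.2.2 ^ 2) := by positivity
    calc 2 * (v.2.1 ^ 2 + v.2.2 ^ 2) = (Real.sqrt (2 * (v.2.1 ^ 2 + v.2.2 ^ 2)))^2 :=
          (Real.sq_sqrt h0).symm
      _ ≤ v.1 ^ 2 := pow_le_pow_left₀ (Real.sqrt_nonneg _) hv 2
  have hprod : (2 * (u.2.1 ^ 2 + u.2.2 ^ 2)) * (2 * (v.2.1 ^ 2 + v.2.2 ^ 2))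
      ≤ u.1 ^ 2 * v.1 ^ 2 := mul_le_mul hu2 hv2 (by positivity) (sq_nonneg _)
  nlinarith [sq_nonneg (u.2.1 * v.2.2 - u.2.2 * v.2.1), mul_nonneg hu1 hv1,
    sq_nonneg (u.2.1 * v.2.1 + u.2.2 * v.2.2)]

lemma nsq_nonneg (w : ℝ × ℝ × ℝ) : 0 ≤ nsq w := by unfold nsq; positivity

lemma nsq_pos_of_ne (w : ℝ × ℝ × ℝ) (h : w ≠ 0) : 0 < nsq w := by
  rcases lt_or_eq_of_le (nsq_nonneg w) with h1 | h1
  · exact h1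
  · exfalso; apply h
    unfold nsq at h1
    have h2 : w.1 = 0 ∧ w.2.1 = 0 ∧ w.2.2 = 0 := by
      refine ⟨?_, ?_, ?_⟩ <;>
        nlinarith [sq_nonneg w.1, sq_nonneg w.2.1, sq_nonneg w.2.2]
    exact Prod.ext h2.1 (Prod.ext h2.2.1 h2.2.2)

theorem EM_properties (M : ℕ) (hM : 2 ≤ M) (Es : ℝ) (hEs : 0 < Es)
    (s : Fin M → ℝ × ℝ × ℝ)
    (hdef : ∀ i : Fin M,
      s i = if (i : ℕ) = 0 then ((Real.sqrt ((M : ℝ) * Es), 0, 0) : ℝ × ℝ × ℝ) else 0) :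
    (1 / (M : ℝ)) * (∑ i, nsq (s i)) = Es ∧
    (1 / (M : ℝ)) • (∑ i, s i) = ((Real.sqrt (Es / (M : ℝ)), 0, 0) : ℝ × ℝ × ℝ) ∧
    1 - nsq (∑ i, s i) / ((M : ℝ) * ∑ i, nsq (s i)) = ((M : ℝ) - 1) / M ∧
    (∀ t : Fin M → ℝ × ℝ × ℝ, (∀ i, t i ∈ cone) → (∃ i, t i ≠ 0) →
      1 - nsq (∑ i, t i) / ((M : ℝ) * ∑ i, nsq (t i)) ≤ ((M : ℝ) - 1) / M) := by
  haveI : NeZero M := ⟨by omega⟩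
  have hMpos : (0:ℝ) < M := by positivity
  have hpt : nsq ((Real.sqrt ((M:ℝ)*Es),0,0) : ℝ×ℝ×ℝ) = (M:ℝ)*Es := by
    have h := Real.sq_sqrt (show (0:ℝ) ≤ (M:ℝ)*Es by positivity)
    show Real.sqrt ((M:ℝ)*Es)^2 + 0^2 + 0^2 = (M:ℝ)*Es
    rw [h]; ring
  have hsum : (∑ i, s i) = ((Real.sqrt ((M : ℝ) * Es), 0, 0) : ℝ × ℝ × ℝ) := by
    have h : ∀ i : Fin M, s i = if i = (0 : Fin M) then
        ((Real.sqrt ((M : ℝ) * Es), 0, 0) : ℝ × ℝ × ℝ) else 0 := by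
      intro i; rw [hdef i]; simp only [← Fin.val_eq_zero_iff]
    rw [Finset.sum_congr rfl (fun i _ => h i)]
    simp
  have hsumn : (∑ i, nsq (s i)) = (M : ℝ) * Es := by
    have h : ∀ i : Fin M, nsq (s i) = if i = (0 : Fin M) then (M : ℝ) * Es else 0 := by
      intro i; rw [hdef i]
      by_cases h : (i : ℕ) = 0
      · rw [if_pos h, if_pos (by simpa [Fin.val_eq_zero_iff] using h), hpt]
      · rw [if_neg h, if_neg (by simpa [Fin.val_eq_zero_iff] using h)]
        simp [nsq]
    rw [Finset.sum_congr rfl (fun i _ => h i)]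
    simp
  have hsqrt : Real.sqrt ((M:ℝ) * Es) = (M:ℝ) * Real.sqrt (Es / M) := by
    rw [show (M:ℝ) * Es = (M:ℝ)^2 * (Es / M) by field_simp,
      Real.sqrt_mul (by positivity), Real.sqrt_sq hMpos.le]
  refine ⟨?_, ?_, ?_, ?_⟩
  · rw [hsumn]; field_simp
  · rw [hsum, hsqrt, Prod.smul_def, Prod.smul_def]
    simp [smul_eq_mul]
    field_simp
  · rw [hsum, hsumn, hpt]
    field_simp
  · intro t hc hne
    obtain ⟨i0, hi0⟩ := hne
    have hApos : 0 < ∑ i, nsq (t i) :=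
      Finset.sum_pos' (fun i _ => nsq_nonneg _)
        ⟨i0, Finset.mem_univ _, nsq_pos_of_ne _ hi0⟩
    have hkey : (∑ i, nsq (t i)) ≤ nsq (∑ i, t i) := by
      have hexp : nsq (∑ i, t i) = ∑ i, ∑ j,
          ((t i).1 * (t j).1 + (t i).2.1 * (t j).2.1 + (t i).2.2 * (t j).2.2) := by
        simp only [nsq, Prod.fst_sum, Prod.snd_sum]
        rw [sq, sq, sq, Finset.sum_mul_sum, Finset.sum_mul_sum, Finset.sum_mul_sum]
        rw [← Finset.sum_add_distrib, ← Finset.sum_add_distrib]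
        refine Finset.sum_congr rfl fun i _ => ?_
        rw [← Finset.sum_add_distrib, ← Finset.sum_add_distrib]
      rw [hexp]
      refine Finset.sum_le_sum fun i _ => ?_
      have h : nsq (t i) = (t i).1 * (t i).1 + (t i).2.1 * (t i).2.1
          + (t i).2.2 * (t i).2.2 := by simp [nsq, sq]
      rw [h]
      exact Finset.single_le_sum
        (fun j _ => cone_inner_nonneg (t i) (t j) (hc i) (hc j)) (Finset.mem_univ i)
    have h1 : (1:ℝ) / M ≤ nsq (∑ i, t i) / ((M : ℝ) * ∑ i, nsq (t i)) := by
      rw [div_le_div_iff₀ hMpos (by positivity)]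
      calc 1 * ((M:ℝ) * ∑ i, nsq (t i)) = (M:ℝ) * ∑ i, nsq (t i) := by ring
        _ ≤ (M:ℝ) * nsq (∑ i, t i) := mul_le_mul_of_nonneg_left hkey hMpos.le
        _ = nsq (∑ i, t i) * M := by ring
    have h2 : ((M:ℝ) - 1) / M = 1 - 1 / M := by field_simp
    rw [h2]
    linarith
end

section
/- Let s be a nonzero point of Υ and consider the M-point constellation with M−1 points at the origin and one point s. Then the expression (Σᵢ s_{i,1})²/(M Σᵢ ‖sᵢ‖² − ‖Σᵢ sᵢ‖²) equals s1²/((M−1)‖s‖²), and this is minimized over s ∈ Υ \ {0} exactly when s is on the boundary of Υ, where it equals 2/(3(M−1)). -/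
/-!
Only one point of the constellation is nonzero, so every sum collapses to its value at `s`, and the
denominator becomes `(M - 1) ‖s‖²`. On the cone `s₁² ≥ 2 (s₂² + s₃²)`, i.e. `3 s₁² ≥ 2 ‖s‖²`, so
`s₁² / ‖s‖² ≥ 2 / 3`, with equality exactly when `s₁² = 2 (s₂² + s₃²)`, which is the boundary.
-/

theorem Fin.sum_apply_ite_val_eq_zero {α β : Type*} [Zero α] [AddCommMonoid β] {M : ℕ} [NeZero M]
    (g : α → β) (hg : g 0 = 0) (s : α) :
    ∑ i : Fin M, g (if (i : ℕ) = 0 then s else 0) = g s := by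
  simp only [Fin.val_eq_zero_iff, apply_ite g, hg, Finset.sum_ite_eq', Finset.mem_univ, if_true]

theorem nsq_pos {w : ℝ × ℝ × ℝ} (hw : w ≠ 0) : 0 < nsq w := by
  obtain ⟨a, b, c⟩ := w
  simp only [nsq, ne_eq, Prod.mk_eq_zero, not_and_or] at hw ⊢
  rcases hw with h | h | h <;> linarith [sq_pos_of_ne_zero h, sq_nonneg a, sq_nonneg b, sq_nonneg c]

namespace cone

variable {w : ℝ × ℝ × ℝ}

theorem fst_nonneg (hw : w ∈ cone) : 0 ≤ w.1 :=
  (Real.sqrt_nonneg _).trans hw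

theorem two_mul_sq_le_fst_sq (hw : w ∈ cone) : 2 * (w.2.1 ^ 2 + w.2.2 ^ 2) ≤ w.1 ^ 2 :=
  (Real.sqrt_le_left (fst_nonneg hw)).mp hw

theorem fst_eq_sqrt_iff (hw : w ∈ cone) :
    w.1 = Real.sqrt (2 * (w.2.1 ^ 2 + w.2.2 ^ 2)) ↔ w.1 ^ 2 = 2 * (w.2.1 ^ 2 + w.2.2 ^ 2) := by
  rw [eq_comm, Real.sqrt_eq_iff_eq_sq (by positivity) (fst_nonneg hw), eq_comm]

theorem two_div_three_le_fst_sq_div_nsq (hw : w ∈ cone) (hw0 : w ≠ 0) :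
    2 / 3 ≤ w.1 ^ 2 / nsq w := by
  rw [div_le_div_iff₀ (by norm_num) (nsq_pos hw0), nsq]
  linarith [two_mul_sq_le_fst_sq hw]

theorem fst_sq_div_nsq_eq_iff (hw : w ∈ cone) (hw0 : w ≠ 0) :
    w.1 ^ 2 / nsq w = 2 / 3 ↔ w.1 = Real.sqrt (2 * (w.2.1 ^ 2 + w.2.2 ^ 2)) := by
  rw [div_eq_div_iff (nsq_pos hw0).ne' (by norm_num), fst_eq_sqrt_iff hw, nsq]
  constructor <;> intro h <;> linarith

end cone

theorem single_nonzero_point_optical_ratio (M : ℕ) (hM : 2 ≤ M)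
    (s : ℝ × ℝ × ℝ) (hs : s ∈ cone) (hne : s ≠ 0)
    (f : Fin M → ℝ × ℝ × ℝ)
    (hdef : ∀ i : Fin M, f i = if (i : ℕ) = 0 then s else 0) :
    (∑ i, (f i).1) ^ 2 / ((M : ℝ) * (∑ i, nsq (f i)) - nsq (∑ i, f i)) =
      s.1 ^ 2 / (((M : ℝ) - 1) * nsq s) ∧
    2 / (3 * ((M : ℝ) - 1)) ≤ s.1 ^ 2 / (((M : ℝ) - 1) * nsq s) ∧
    (s.1 ^ 2 / (((M : ℝ) - 1) * nsq s) = 2 / (3 * ((M : ℝ) - 1)) ↔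
      s.1 = Real.sqrt (2 * (s.2.1 ^ 2 + s.2.2 ^ 2))) := by
  have : NeZero M := ⟨by omega⟩
  have hM1 : 0 < (M : ℝ) - 1 := by
    have : (2 : ℝ) ≤ M := by exact_mod_cast hM
    linarith
  have hsum {β : Type} [AddCommMonoid β] (g : ℝ × ℝ × ℝ → β) (hg : g 0 = 0) :
      ∑ i, g (f i) = g s := by
    simp only [hdef]
    exact Fin.sum_apply_ite_val_eq_zero g hg s
  have hratio : s.1 ^ 2 / (((M : ℝ) - 1) * nsq s) = s.1 ^ 2 / nsq s / ((M : ℝ) - 1) := by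
    rw [div_div, mul_comm]
  have htwo : 2 / (3 * ((M : ℝ) - 1)) = 2 / 3 / ((M : ℝ) - 1) := by rw [div_div]
  refine ⟨?_, ?_, ?_⟩
  · rw [hsum Prod.fst rfl, hsum nsq (by simp [nsq]), show ∑ i, f i = s from hsum id rfl]
    congr 1
    ring
  · rw [hratio, htwo]
    exact div_le_div_of_nonneg_right (cone.two_div_three_le_fst_sq_div_nsq hs hne) hM1.le
  · rw [hratio, htwo, div_left_inj' hM1.ne']
    exact cone.fst_sq_div_nsq_eq_iff hs hne
end
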